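/- Let N ∈ ℕ, let (M,0) be a rooted model based on a frame of size at most N, let Φ be a σ-cover of M, let M' be a model, let Z be a σ-bisimulation between M and M' with w Z w' for some worlds w of M and w' of M', and let φ ∈ Φ be the formula with M',w' ⊨ φ. Then for every atom p ∈ σ: M',w' ⊨ p if and only if M,0 ⊨ ◇^{≤N}(φ ∧ p). -/
import Mathlib


inductive MForm (α : Type) : Type
  | top : MForm α
  | atom : α → MForm α
  | neg : MForm α → MForm α
  | and : MForm α → MForm α → MForm α
  | box : MForm α → MForm α
deriving DecidableEq

namespace MForm

def imp {α : Type} (φ ψ : MForm α) : MForm α := neg (and φ (neg ψ))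

def dia {α : Type} (φ : MForm α) : MForm α := neg (box (neg φ))

def sig {α : Type} [DecidableEq α] : MForm α → Finset α
  | top => ∅
  | atom p => {p}
  | neg φ => sig φ
  | and φ ψ => sig φ ∪ sig ψ
  | box φ => sig φ

def IsProp {α : Type} : MForm α → Prop
  | top => True
  | atom _ => True
  | neg φ => IsProp φ
  | and φ ψ => IsProp φ ∧ IsProp ψ
  | box _ => False

def subf {α : Type} [DecidableEq α] : MForm α → Finset (MForm α)
  | top => {top}
  | atom p => {atom p}
  | neg φ => insert (neg φ) (subf φ)
  | and φ ψ => insert (and φ ψ) (subf φ ∪ subf ψ)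
  | box φ => insert (box φ) (subf φ)

/-- The dag-size of a formula: the number of its distinct subformulas. -/
def dagSize {α : Type} [DecidableEq α] (φ : MForm α) : ℕ := (subf φ).card

end MForm

def psat {α : Type} (v : α → Prop) : MForm α → Prop
  | .top => True
  | .atom p => v p
  | .neg φ => ¬ psat v φ
  | .and φ ψ => psat v φ ∧ psat v ψ
  | .box _ => True

/-- Propositional tautology. -/
def PTaut {α : Type} (φ : MForm α) : Prop := ∀ v : α → Prop, psat v φ

def bigAnd {α : Type} : List (MForm α) → MForm α
  | [] => .top
  | φ :: l => .and φ (bigAnd l)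

def bigOr {α : Type} (l : List (MForm α)) : MForm α := .neg (bigAnd (l.map .neg))

def boxIter {α : Type} : ℕ → MForm α → MForm α
  | 0, φ => φ
  | n + 1, φ => .box (boxIter n φ)

def diaIter {α : Type} : ℕ → MForm α → MForm α
  | 0, φ => φ
  | n + 1, φ => MForm.dia (diaIter n φ)

/-- `□^{≤n} φ`. -/
def ble {α : Type} (n : ℕ) (φ : MForm α) : MForm α :=
  bigAnd ((List.range (n + 1)).map (fun k => boxIter k φ))

/-- `◇^{≤n} φ`. -/
def dle {α : Type} (n : ℕ) (φ : MForm α) : MForm α := .neg (ble n (.neg φ))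

def substAtoms {α β : Type} (s : α → MForm β) : MForm α → MForm β
  | .top => .top
  | .atom a => s a
  | .neg φ => .neg (substAtoms s φ)
  | .and φ ψ => .and (substAtoms s φ) (substAtoms s ψ)
  | .box φ => .box (substAtoms s φ)

structure Frame where
  W : Type
  ne : Nonempty W
  R : W → W → Prop

structure PFrame extends Frame where
  pt : W

def sat (F : Frame) (V : F.W → ℕ → Prop) : F.W → MForm ℕ → Prop
  | w, .top => True
  | w, .atom p => V w p
  | w, .neg φ => ¬ sat F V w φ
  | w, .and φ ψ => sat F V w φ ∧ sat F V w ψ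
  | w, .box φ => ∀ v, F.R w v → sat F V v φ

def validAt (F : Frame) (w : F.W) (φ : MForm ℕ) : Prop := ∀ V, sat F V w φ

def Log (𝓕 : Set PFrame) : Set (MForm ℕ) := {φ | ∀ P ∈ 𝓕, validAt P.toFrame P.pt φ}

def Rooted (F : Frame) (w : F.W) : Prop := ∀ v, Relation.ReflTransGen F.R w v

def StrImp (L : Set (MForm ℕ)) (σ : Finset ℕ) (φ χ : MForm ℕ) : Prop :=
  χ.sig ⊆ σ ∧ φ.imp χ ∈ L ∧
    ∀ ψ : MForm ℕ, ψ.sig ⊆ σ → φ.imp ψ ∈ L → χ.imp ψ ∈ L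

def UnifInt (L : Set (MForm ℕ)) (σ : Finset ℕ) (φ χ : MForm ℕ) : Prop :=
  χ.sig ⊆ σ ∧ φ.imp χ ∈ L ∧
    ∀ ψ : MForm ℕ, ψ.sig ∩ φ.sig ⊆ σ → φ.imp ψ ∈ L → χ.imp ψ ∈ L

def CraigInt (L : Set (MForm ℕ)) (φ ψ χ : MForm ℕ) : Prop :=
  φ.imp χ ∈ L ∧ χ.imp ψ ∈ L ∧ χ.sig ⊆ φ.sig ∩ ψ.sig

def HasCIP (L : Set (MForm ℕ)) : Prop :=
  ∀ φ ψ : MForm ℕ, φ.imp ψ ∈ L → ∃ χ, CraigInt L φ ψ χ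

def IsBisim (σ : Finset ℕ) (F₁ : Frame) (V₁ : F₁.W → ℕ → Prop)
    (F₂ : Frame) (V₂ : F₂.W → ℕ → Prop) (Z : F₁.W → F₂.W → Prop) : Prop :=
  (∀ w₁ w₂, Z w₁ w₂ → ∀ p ∈ σ, (V₁ w₁ p ↔ V₂ w₂ p)) ∧
  (∀ w₁ w₂ v₁, Z w₁ w₂ → F₁.R w₁ v₁ → ∃ v₂, F₂.R w₂ v₂ ∧ Z v₁ v₂) ∧
  (∀ w₁ w₂ v₂, Z w₁ w₂ → F₂.R w₂ v₂ → ∃ v₁, F₁.R w₁ v₁ ∧ Z v₁ v₂)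

def Bisim (σ : Finset ℕ) (F₁ : Frame) (V₁ : F₁.W → ℕ → Prop) (w₁ : F₁.W)
    (F₂ : Frame) (V₂ : F₂.W → ℕ → Prop) (w₂ : F₂.W) : Prop :=
  ∃ Z, IsBisim σ F₁ V₁ F₂ V₂ Z ∧ Z w₁ w₂

def IsEME (σ : Finset ℕ) (Φ : Finset (MForm ℕ)) : Prop :=
  (∀ φ ∈ Φ, φ.IsProp ∧ φ.sig ⊆ σ) ∧
  (∀ v : ℕ → Prop, ∃ φ ∈ Φ, psat v φ) ∧
  (∀ φ ∈ Φ, ∀ ψ ∈ Φ, φ ≠ ψ → ∀ v : ℕ → Prop, ¬ (psat v φ ∧ psat v ψ))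

def IsCover (σ : Finset ℕ) (Φ : Finset (MForm ℕ)) (F : Frame) (V : F.W → ℕ → Prop) : Prop :=
  ∀ φ ∈ Φ, ∀ w₁ w₂, sat F V w₁ φ → sat F V w₂ φ →
    ∀ χ : MForm ℕ, χ.IsProp → χ.sig ⊆ σ → (sat F V w₁ χ ↔ sat F V w₂ χ)

noncomputable def coverFml (σ : Finset ℕ) (Φ : Finset (MForm ℕ)) (N : ℕ) : MForm ℕ :=
  bigAnd (Φ.toList.map (fun φ => bigAnd (σ.toList.map (fun p =>
    MForm.imp (dle N (.and φ (.atom p))) (ble N (MForm.imp φ (.atom p)))))))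

/-- Iterated relation. -/
def relIter (F : Frame) : ℕ → F.W → F.W → Prop
  | 0, w, v => w = v
  | n + 1, w, v => ∃ u, F.R w u ∧ relIter F n u v

lemma relIter_snoc {F : Frame} {k : ℕ} {r u v : F.W}
    (h : relIter F k r u) (huv : F.R u v) : relIter F (k + 1) r v := by
  induction k generalizing r with
  | zero => cases h; exact ⟨v, huv, rfl⟩
  | succ n ih =>
    obtain ⟨x, hx, h'⟩ := h
    exact ⟨x, hx, ih h'⟩

lemma reflTrans_relIter {F : Frame} {r v : F.W}
    (h : Relation.ReflTransGen F.R r v) : ∃ k, relIter F k r v := by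
  induction h with
  | refl => exact ⟨0, rfl⟩
  | tail _ huv ih => obtain ⟨k, hk⟩ := ih; exact ⟨k + 1, relIter_snoc hk huv⟩

lemma relIter_path {F : Frame} {k : ℕ} {r v : F.W} (h : relIter F k r v) :
    ∃ f : ℕ → F.W, f 0 = r ∧ f k = v ∧ ∀ i < k, F.R (f i) (f (i + 1)) := by
  induction k generalizing r with
  | zero => cases h; exact ⟨fun _ => v, rfl, rfl, fun i hi => absurd hi (by omega)⟩
  | succ n ih =>
    obtain ⟨u, hu, h'⟩ := h
    obtain ⟨f, hf0, hfn, hstep⟩ := ih h'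
    refine ⟨fun i => if i = 0 then r else f (i - 1), by simp, by simp [hfn], ?_⟩
    intro i hi
    rcases Nat.eq_zero_or_pos i with h0 | h0
    · subst h0; simpa [hf0] using hu
    · have : i ≠ 0 := by omega
      have : (fun j => if j = 0 then r else f (j - 1)) i = f (i - 1) := by simp [this]
      simp only [this]
      have h1 : i + 1 ≠ 0 := by omega
      simp only [if_neg h1]
      have : i - 1 + 1 = i + 1 - 1 := by omega
      rw [← this] at *
      exact hstep (i - 1) (by omega)

lemma path_relIter {F : Frame} {k : ℕ} {f : ℕ → F.W}
    (hstep : ∀ i < k, F.R (f i) (f (i + 1))) : relIter F k (f 0) (f k) := by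
  induction k with
  | zero => rfl
  | succ n ih =>
    exact relIter_snoc (ih fun i hi => hstep i (by omega)) (hstep n (by omega))

/-- Path shortening: any reachable world is reachable in fewer than `card W` steps. -/
lemma relIter_lt_card {F : Frame} (hfin : Finite F.W) {k : ℕ} {r v : F.W}
    (h : relIter F k r v) : ∃ m < Nat.card F.W, relIter F m r v := by
  induction k using Nat.strong_induction_on generalizing r v with
  | _ k ih =>
    by_cases hk : k < Nat.card F.W
    · exact ⟨k, hk, h⟩
    · push_neg at hk
      obtain ⟨f, hf0, hfk, hstep⟩ := relIter_path h
      have : Fintype F.W := Fintype.ofFinite F.W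
      have hlt : Fintype.card F.W < Fintype.card (Fin (k + 1)) := by
        simp only [Fintype.card_fin]
        have := Nat.card_eq_fintype_card (α := F.W)
        omega
      obtain ⟨i, j, hne, heq⟩ :=
        Fintype.exists_ne_map_eq_of_card_lt (fun i : Fin (k + 1) => f i.val) hlt
      wlog hij : i.val < j.val generalizing i j
      · exact this j i hne.symm heq.symm (by omega)
      -- splice the path
      set g : ℕ → F.W := fun n => if n < i.val then f n else f (n + (j.val - i.val)) with hg
      have hg0 : g 0 = r := by
        by_cases h0 : (0 : ℕ) < i.val
        · simp [hg, h0, hf0]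
        · have hi0 : (i.val : ℕ) = 0 := by omega
          simp only [hg, if_neg h0]
          have : 0 + ((j.val : ℕ) - i.val) = j.val := by omega
          rw [this, ← heq, hi0, hf0]
      have hgend : g (k - (j.val - i.val)) = v := by
        have hji : j.val - i.val ≤ k := by omega
        have : ¬ (k - (j.val - i.val) < i.val) := by omega
        simp only [hg, if_neg this]
        have : k - (j.val - i.val) + (j.val - i.val) = k := by omega
        rw [this, hfk]
      have hgstep : ∀ n < k - (j.val - i.val), F.R (g n) (g (n + 1)) := by
        intro n hn
        by_cases h1 : n + 1 < i.val
        · have h2 : n < i.val := by omega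
          simp only [hg, if_pos h1, if_pos h2]
          exact hstep n (by omega)
        · by_cases h2 : n < i.val
          · simp only [hg, if_neg h1, if_pos h2]
            have hj : n + 1 + ((j.val : ℕ) - i.val) = j.val := by omega
            rw [hj, ← heq]
            have hi : (i.val : ℕ) = n + 1 := by omega
            rw [hi]
            exact hstep n (by omega)
          · simp only [hg, if_neg h1, if_neg h2]
            have : n + 1 + (j.val - i.val) = n + (j.val - i.val) + 1 := by omega
            rw [this]
            exact hstep (n + (j.val - i.val)) (by omega)
      have : relIter F (k - (j.val - i.val)) r v := by
        have := path_relIter (F := F) (f := g) hgstep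
        rwa [hg0, hgend] at this
      exact ih (k - (j.val - i.val)) (by omega) this

lemma sat_bigAnd (F : Frame) (V : F.W → ℕ → Prop) (w : F.W) (l : List (MForm ℕ)) :
    sat F V w (bigAnd l) ↔ ∀ φ ∈ l, sat F V w φ := by
  induction l with
  | nil => simp [bigAnd, sat]
  | cons ψ l ih => simp [bigAnd, sat, ih]

lemma sat_boxIter (F : Frame) (V : F.W → ℕ → Prop) (k : ℕ) (w : F.W) (φ : MForm ℕ) :
    sat F V w (boxIter k φ) ↔ ∀ v, relIter F k w v → sat F V v φ := by
  induction k generalizing w with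
  | zero =>
    constructor
    · rintro h v rfl; exact h
    · intro h; exact h w rfl
  | succ n ih =>
    simp only [boxIter, sat, ih]
    constructor
    · rintro h v ⟨u, hu, h'⟩; exact h u hu v h'
    · intro h u hu v h'; exact h v ⟨u, hu, h'⟩

lemma sat_ble (F : Frame) (V : F.W → ℕ → Prop) (n : ℕ) (w : F.W) (φ : MForm ℕ) :
    sat F V w (ble n φ) ↔ ∀ k ≤ n, ∀ v, relIter F k w v → sat F V v φ := by
  simp only [ble, sat_bigAnd, List.mem_map, List.mem_range]
  constructor
  · rintro h k hk v hv
    exact (sat_boxIter F V k w φ).1 (h _ ⟨k, by omega, rfl⟩) v hv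
  · rintro h ψ ⟨k, hk, rfl⟩
    exact (sat_boxIter F V k w φ).2 (h k (by omega))

lemma sat_dle (F : Frame) (V : F.W → ℕ → Prop) (n : ℕ) (w : F.W) (φ : MForm ℕ) :
    sat F V w (dle n φ) ↔ ∃ k ≤ n, ∃ v, relIter F k w v ∧ sat F V v φ := by
  simp only [dle, sat, sat_ble]
  push_neg
  rfl

/-- Propositional formulas over σ transfer along a σ-bisimulation. -/
lemma prop_transfer {σ : Finset ℕ} {F : Frame} {V : F.W → ℕ → Prop}
    {F' : Frame} {V' : F'.W → ℕ → Prop} {Z : F.W → F'.W → Prop}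
    (hZ : IsBisim σ F V F' V' Z) {w : F.W} {w' : F'.W} (hww' : Z w w') :
    ∀ χ : MForm ℕ, χ.IsProp → χ.sig ⊆ σ → (sat F V w χ ↔ sat F' V' w' χ) := by
  intro χ hprop hsig
  induction χ with
  | top => simp [sat]
  | atom p =>
    have : p ∈ σ := hsig (by simp [MForm.sig])
    simpa [sat] using hZ.1 w w' hww' p this
  | neg ψ ih => simp only [sat]; rw [ih hprop hsig]
  | and ψ₁ ψ₂ ih₁ ih₂ =>
    simp only [sat]
    rw [ih₁ hprop.1 (fun x hx => hsig (Finset.mem_union_left _ hx)),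
        ih₂ hprop.2 (fun x hx => hsig (Finset.mem_union_right _ hx))]
  | box ψ ih => exact absurd hprop (by simp [MForm.IsProp])

/-- if `(M,r)` is a rooted model of size at most `N`, `Φ` a σ-cover of `M`,
`Z` a σ-bisimulation between `M` and `M'` with `w Z w'`, and `φ ∈ Φ` holds at `w'` in `M'`,
then for every `p ∈ σ`: `M',w' ⊨ p` iff `M,r ⊨ ◇^{≤N}(φ ∧ p)`. -/
theorem stmt7 (N : ℕ) (σ : Finset ℕ) (Φ : Finset (MForm ℕ)) (hEME : IsEME σ Φ)
    (F : Frame) (V : F.W → ℕ → Prop) (r : F.W)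
    (hroot : Rooted F r) (hfin : Finite F.W) (hcard : Nat.card F.W ≤ N)
    (hcov : IsCover σ Φ F V)
    (F' : Frame) (V' : F'.W → ℕ → Prop)
    (Z : F.W → F'.W → Prop) (hZ : IsBisim σ F V F' V' Z)
    (w : F.W) (w' : F'.W) (hww' : Z w w')
    (φ : MForm ℕ) (hφ : φ ∈ Φ) (hsatφ : sat F' V' w' φ) :
    ∀ p ∈ σ, (sat F' V' w' (.atom p) ↔ sat F V r (dle N (.and φ (.atom p)))) := by
  intro p hp
  obtain ⟨hφprop, hφsig⟩ := hEME.1 φ hφ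
  have hsatw : sat F V w φ := (prop_transfer hZ hww' φ hφprop hφsig).2 hsatφ
  constructor
  · intro hp'
    have hVwp : V w p := (hZ.1 w w' hww' p hp).2 hp'
    obtain ⟨k, hk⟩ := reflTrans_relIter (hroot w)
    obtain ⟨m, hm, hrel⟩ := relIter_lt_card hfin hk
    exact (sat_dle F V N r _).2 ⟨m, by omega, w, hrel, hsatw, hVwp⟩
  · intro h
    obtain ⟨k, hk, v, hrel, hsatv, hVvp⟩ := (sat_dle F V N r _).1 h
    have := hcov φ hφ v w hsatv hsatw (.atom p) trivial (by simp [MForm.sig, hp])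
    have hVwp : V w p := this.1 hVvp
    exact (hZ.1 w w' hww' p hp).1 hVwp
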